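/- arXiv:2302.00139 — 2 statements merged into one kernel-verified Lean document; each statement's English description precedes it below -/
import Mathlib

section
/- The function g(z) = (z-1)^2 - z (log z)^2 defined on (0,∞) attains its unique global minimum value 0 at z = 1. -/
/-!
Put `t = (log z) / 2`, so that `z = exp (2 t)`. Then
`(z - 1)^2 - z (log z)^2 = 4 z (sinh² t - t²)`, and `|t| < |sinh t|` for every `t ≠ 0`.
-/

open Real

lemma Real.sq_lt_sinh_sq {t : ℝ} (ht : t ≠ 0) : t ^ 2 < sinh t ^ 2 := by
  rw [sq_lt_sq, abs_sinh]
  exact self_lt_sinh_iff.mpr (abs_pos.mpr ht)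

lemma Real.sub_one_sq_sub_mul_log_sq {z : ℝ} (hz : 0 < z) :
    (z - 1) ^ 2 - z * log z ^ 2 = 4 * z * (sinh (log z / 2) ^ 2 - (log z / 2) ^ 2) := by
  obtain ⟨t, rfl⟩ : ∃ t, z = exp t ^ 2 :=
    ⟨log z / 2, by rw [← exp_nat_mul, Nat.cast_ofNat, mul_div_cancel₀ _ two_ne_zero, exp_log hz]⟩
  have hexp_neg : exp (-t) * exp t = 1 := by rw [← exp_add, neg_add_cancel, exp_zero]
  rw [log_pow, log_exp, Nat.cast_ofNat, mul_div_cancel_left₀ _ two_ne_zero, sinh_eq]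
  linear_combination (2 * exp t ^ 2 - 1 - exp t * exp (-t)) * hexp_neg

lemma Real.sub_one_sq_sub_mul_log_sq_pos {z : ℝ} (hz : 0 < z) (hz₁ : z ≠ 1) :
    0 < (z - 1) ^ 2 - z * log z ^ 2 := by
  have ht : log z / 2 ≠ 0 := div_ne_zero (log_ne_zero_of_pos_of_ne_one hz hz₁) two_ne_zero
  rw [sub_one_sq_sub_mul_log_sq hz]
  exact mul_pos (by positivity) (sub_pos.mpr (sq_lt_sinh_sq ht))

/-- The function `g z = (z-1)^2 - z (log z)^2` on `(0, ∞)` attains its unique global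
minimum value `0` at `z = 1`. -/
theorem g_unique_global_min :
    (∀ z : ℝ, 0 < z → 0 ≤ (z - 1) ^ 2 - z * (Real.log z) ^ 2) ∧
    ((1 : ℝ) - 1) ^ 2 - 1 * (Real.log 1) ^ 2 = 0 ∧
    (∀ z : ℝ, 0 < z → (z - 1) ^ 2 - z * (Real.log z) ^ 2 = 0 → z = 1) := by
  refine ⟨fun z hz => ?_, by simp, fun z hz hg => ?_⟩
  · rcases eq_or_ne z 1 with rfl | hz₁
    · simp
    · exact (sub_one_sq_sub_mul_log_sq_pos hz hz₁).le
  · by_contra hz₁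
    exact (sub_one_sq_sub_mul_log_sq_pos hz hz₁).ne' hg
end

section
/- Let φ_h = ∑_i φ_i ϕ_i be a finite element function with nodal values φ_i > 0 with respect to nonnegative basis functions ϕ_i satisfying ∑_i ∫ ϕ_i = |Ω|, and let ψ_h = ∑_i ψ_i ϕ_i. If there exist constants A, B ≥ 0 with log( ∑_i e^{μψ_i} ∫ϕ_i ) ≤ A + B μ², then (φ_h, ψ_h)_h := ∑_i φ_i ψ_i ∫ϕ_i satisfies (φ_h, ψ_h)_h ≤ (1/μ)(φ_h, log(φ_h/φ̄))_h + (‖φ_h‖_{L¹}/μ)(A − log|Ω|) + Bμ‖φ_h‖_{L¹}, where ‖φ_h‖_{L¹} = ∑_i φ_i ∫ϕ_i and φ̄ = ‖φ_h‖_{L¹}/|Ω|, and (φ_h, log(φ_h/φ̄))_h = ∑_i φ_i log(φ_i/φ̄) ∫ϕ_i. -/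
/-!
Weight the nodes by the probability `p i = φ i * w i / M`, `M = ∑ φ j * w j`. Jensen's inequality
for `exp` applied to `x i = μ * ψ i - log (φ i / φ̄)` gives `∑ p x ≤ log ∑ p exp x`, and the choice
of `x` makes `∑ p exp x = (∑ exp (μ ψ) w) / vol`. Multiplying by `M`, this is the duality
`μ (φ, ψ) ≤ (φ, log (φ / φ̄)) + M log ((∑ exp (μ ψ) w) / vol)`; the assumed bound on the log-sum
then gives the claim after dividing by `μ`.
-/

open Finset Real

section
variable {ι : Type*} {s : Finset ι}

theorem sum_mul_le_log_sum_mul_exp {p : ι → ℝ}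
    (hp₀ : ∀ i ∈ s, 0 ≤ p i) (hp₁ : ∑ i ∈ s, p i = 1) (x : ι → ℝ) :
    ∑ i ∈ s, p i * x i ≤ log (∑ i ∈ s, p i * exp (x i)) := by
  have hJensen : exp (∑ i ∈ s, p i * x i) ≤ ∑ i ∈ s, p i * exp (x i) := by
    simpa only [smul_eq_mul] using convexOn_exp.map_sum_le hp₀ hp₁ (fun i _ => Set.mem_univ (x i))
  exact (le_log_iff_exp_le ((exp_pos _).trans_le hJensen)).2 hJensen

theorem sum_mul_pos_of_sum_pos {w φ : ι → ℝ}
    (hw : ∀ i ∈ s, 0 ≤ w i) (hφ : ∀ i ∈ s, 0 < φ i) (hW : 0 < ∑ i ∈ s, w i) :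
    0 < ∑ i ∈ s, φ i * w i := by
  obtain ⟨i, hi, hwi⟩ : ∃ i ∈ s, 0 < w i := by
    by_contra! h
    exact (sum_nonpos h).not_gt hW
  exact sum_pos' (fun j hj => mul_nonneg (hφ j hj).le (hw j hj)) ⟨i, hi, mul_pos (hφ i hi) hwi⟩

/-- Discrete Donsker–Varadhan inequality. -/
theorem sum_mul_mul_le_entropy_add_mul_log_sum_exp {w φ : ι → ℝ}
    {vol : ℝ} (hw : ∀ i ∈ s, 0 ≤ w i) (hφ : ∀ i ∈ s, 0 < φ i) (hvol : 0 < vol)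
    (hM : 0 < ∑ i ∈ s, φ i * w i) (f : ι → ℝ) :
    ∑ i ∈ s, φ i * f i * w i ≤
      ∑ i ∈ s, φ i * log (φ i / ((∑ j ∈ s, φ j * w j) / vol)) * w i +
      (∑ j ∈ s, φ j * w j) * log ((∑ i ∈ s, exp (f i) * w i) / vol) := by
  set M := ∑ j ∈ s, φ j * w j
  set p : ι → ℝ := fun i => φ i * w i / M
  set x : ι → ℝ := fun i => f i - log (φ i / (M / vol))
  have hp₀ : ∀ i ∈ s, 0 ≤ p i := fun i hi => by have := hφ i hi; have := hw i hi; positivity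
  have hp₁ : ∑ i ∈ s, p i = 1 := by rw [← sum_div, div_self hM.ne']
  have hpx : ∑ i ∈ s, p i * x i =
      (∑ i ∈ s, φ i * f i * w i - ∑ i ∈ s, φ i * log (φ i / (M / vol)) * w i) / M := by
    rw [← sum_sub_distrib, sum_div]
    refine sum_congr rfl fun i _ => ?_
    simp only [p, x]
    ring
  have hpexp : ∑ i ∈ s, p i * exp (x i) = (∑ i ∈ s, exp (f i) * w i) / vol := by
    rw [sum_div]
    refine sum_congr rfl fun i hi => ?_
    have := hφ i hi
    simp only [p, x]
    rw [exp_sub, exp_log (by positivity)]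
    field_simp
  have key := sum_mul_le_log_sum_mul_exp hp₀ hp₁ x
  rw [hpx, hpexp, div_le_iff₀ hM] at key
  linarith

end

open Finset in
theorem discrete_duality_entropy_general {ι : Type*} (s : Finset ι) (w φ ψ : ι → ℝ)
    (μ A B vol : ℝ) (hμ : 0 < μ)
    (hw : ∀ i ∈ s, 0 ≤ w i) (hφ : ∀ i ∈ s, 0 < φ i)
    (hvol : 0 < vol) (hW : ∑ i ∈ s, w i = vol)
    (hlog : Real.log (∑ i ∈ s, Real.exp (μ * ψ i) * w i) ≤ A + B * μ ^ 2) :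
    ∑ i ∈ s, φ i * ψ i * w i ≤
      (1 / μ) * ∑ i ∈ s, φ i * Real.log (φ i / ((∑ j ∈ s, φ j * w j) / vol)) * w i +
      ((∑ j ∈ s, φ j * w j) / μ) * (A - Real.log vol) +
      B * μ * (∑ j ∈ s, φ j * w j) := by
  set M := ∑ j ∈ s, φ j * w j
  set E := ∑ i ∈ s, φ i * log (φ i / (M / vol)) * w i
  have hM : 0 < M := sum_mul_pos_of_sum_pos hw hφ (hW ▸ hvol)
  have hS : 0 < ∑ i ∈ s, exp (μ * ψ i) * w i :=
    sum_mul_pos_of_sum_pos hw (fun i _ => exp_pos _) (hW ▸ hvol)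
  have hduality : μ * ∑ i ∈ s, φ i * ψ i * w i ≤ E + M * (A + B * μ ^ 2 - log vol) := by
    have h := sum_mul_mul_le_entropy_add_mul_log_sum_exp hw hφ hvol hM (fun i => μ * ψ i)
    rw [log_div hS.ne' hvol.ne'] at h
    calc μ * ∑ i ∈ s, φ i * ψ i * w i = ∑ i ∈ s, φ i * (μ * ψ i) * w i := by
          rw [mul_sum]; exact sum_congr rfl fun i _ => by ring
      _ ≤ _ := h.trans (by gcongr)
  calc ∑ i ∈ s, φ i * ψ i * w i ≤ (E + M * (A + B * μ ^ 2 - log vol)) / μ := by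
        rw [le_div_iff₀ hμ]; linarith
    _ = _ := by field_simp; ring

open Finset in
theorem discrete_duality_entropy {ι : Type*} (s : Finset ι) (w φ ψ : ι → ℝ)
    (μ A B vol : ℝ) (hμ : 0 < μ) (hA : 0 ≤ A) (hB : 0 ≤ B)
    (hw : ∀ i ∈ s, 0 ≤ w i) (hφ : ∀ i ∈ s, 0 < φ i)
    (hvol : 0 < vol) (hW : ∑ i ∈ s, w i = vol)
    (hlog : Real.log (∑ i ∈ s, Real.exp (μ * ψ i) * w i) ≤ A + B * μ ^ 2) :
    ∑ i ∈ s, φ i * ψ i * w i ≤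
      (1 / μ) * ∑ i ∈ s, φ i * Real.log (φ i / ((∑ j ∈ s, φ j * w j) / vol)) * w i +
      ((∑ j ∈ s, φ j * w j) / μ) * (A - Real.log vol) +
      B * μ * (∑ j ∈ s, φ j * w j) :=
  discrete_duality_entropy_general s w φ ψ μ A B vol hμ hw hφ hvol hW hlog
end
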